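/- arXiv:quant-ph/0412071 — 3 statements merged into one kernel-verified Lean document; each statement's English description precedes it below -/
import Mathlib

section
/- Let d ≥ 1 be an integer and let G = (V, E) be a finite simple graph with nonempty vertex set. If G has a d-locally evenly seen set, then δ_loc(G) ≤ d − 1. -/
open SimpleGraph

variable {V : Type*}

/-- Local complementation of `G` at the vertex `v`: adjacency among the
neighbors of `v` is complemented, i.e. the edge set is `E Δ K_v`. -/
def localComp (G : SimpleGraph V) (v : V) : SimpleGraph V where
  Adj u w := u ≠ w ∧ ¬ (G.Adj u w ↔ (G.Adj v u ∧ G.Adj v w))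
  symm := by
    constructor
    intro u w h
    refine ⟨h.1.symm, ?_⟩
    have h1 := G.adj_comm u w
    have h2 := h.2
    tauto
  loopless := by
    constructor
    intro u h
    exact h.1 rfl

/-- The minimal vertex degree `δ(G)` of a graph. -/
noncomputable def minDegree (G : SimpleGraph V) : ℕ :=
  sInf (Set.range fun v => (G.neighborSet v).ncard)

/-- The minimal degree under local complementation `δ_loc(G)`: the minimum of
`δ(G')` over all graphs `G'` obtainable from `G` by a finite sequence of
local complementations. -/
noncomputable def minDegreeLoc (G : SimpleGraph V) : ℕ :=
  sInf {n | ∃ l : List V, minDegree (l.foldl localComp G) = n}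

/-- `D` is an evenly seen set if every vertex outside `D` has an even number
of neighbors in `D`. -/
def EvenlySeen (G : SimpleGraph V) (D : Set V) : Prop :=
  ∀ u ∉ D, Even ((G.neighborSet u ∩ D).ncard)

/-- A nonempty set `K` is `d`-locally evenly seen if there is a set `D` with
`K ⊆ D ⊆ V` and `|D| = d` such that every vertex outside `D` has an even
number of neighbors in `K`. -/
def LocallyEvenlySeen (G : SimpleGraph V) (d : ℕ) (K : Set V) : Prop :=
  K.Nonempty ∧ ∃ D : Set V, K ⊆ D ∧ D.ncard = d ∧
    ∀ u ∉ D, Even ((G.neighborSet u ∩ K).ncard)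

/-!
Induction on `|K|`. If some `x ∈ K` has all its neighbours in `D`, then `deg x ≤ |D| - 1`.
Otherwise pick `x ∈ K`. If `|N(x) ∩ K|` is odd, local complementation at `x` replaces `N(u)` by
`N(u) ∆ (N(x) \ {u})` for each neighbour `u ∉ D` of `x`; as `N(u) ∩ (K \ {x})` is odd (it lost
`x`), every vertex outside `D` then sees `K \ {x}` evenly. If `|N(x) ∩ K|` is even, first
complement at a neighbour `v ∉ D` of `x`: this flips the parity at `x` because `v` sees `K`
evenly, and vertices outside `D` keep seeing `K` evenly.
-/

open scoped symmDiff

theorem Set.even_ncard_symmDiff_iff {α : Type*} {s t : Set α} (hs : s.Finite) (ht : t.Finite) :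
    Even (s ∆ t).ncard ↔ (Even s.ncard ↔ Even t.ncard) := by
  have hsub : (s ∩ t).ncard + (s ∆ t).ncard = (s ∪ t).ncard := by
    rw [symmDiff_eq_sup_sdiff_inf, add_comm]
    exact Set.ncard_sdiff_add_ncard_of_subset
      (Set.inter_subset_left.trans Set.subset_union_left) (hs.union ht)
  have hunion := Set.ncard_union_add_ncard_inter s t hs ht
  have hsum : (s ∆ t).ncard + 2 * (s ∩ t).ncard = s.ncard + t.ncard := by omega
  rw [← Nat.even_add, ← hsum, Nat.even_add, iff_true_right (even_two_mul _)]

theorem Set.even_ncard_sdiff_singleton_iff {α : Type*} {s : Set α} {a : α} (ha : a ∈ s)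
    (hs : s.Finite) : Even (s \ {a}).ncard ↔ ¬Even s.ncard := by
  rw [← Set.ncard_sdiff_singleton_add_one ha hs, Nat.even_add_one, not_not]

def EvenlySeenOutside (G : SimpleGraph V) (K D : Set V) : Prop :=
  ∀ u ∉ D, Even ((G.neighborSet u ∩ K).ncard)

variable {G : SimpleGraph V} {u v : V}

theorem localComp_neighborSet_of_not_adj (h : ¬G.Adj v u) :
    (localComp G v).neighborSet u = G.neighborSet u := by
  ext w
  simp only [mem_neighborSet, localComp]
  have := G.ne_of_adj (a := u) (b := w)
  tauto

theorem localComp_neighborSet_of_adj (h : G.Adj v u) :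
    (localComp G v).neighborSet u = G.neighborSet u ∆ (G.neighborSet v \ {u}) := by
  ext w
  simp only [mem_neighborSet, localComp, Set.mem_symmDiff, Set.mem_sdiff, Set.mem_singleton_iff]
  have := G.ne_of_adj (a := u) (b := w)
  by_cases hw : u = w
  · subst hw; simp [h]
  · have := Ne.symm hw
    tauto

variable {K D : Set V} {x : V}

theorem even_ncard_localComp_neighborSet_inter_iff (hK : K.Finite) (h : G.Adj v u) :
    Even (((localComp G v).neighborSet u ∩ K).ncard) ↔
      (Even ((G.neighborSet u ∩ K).ncard) ↔ Even (((G.neighborSet v ∩ K) \ {u}).ncard)) := by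
  rw [localComp_neighborSet_of_adj h, Set.inter_symmDiff_distrib_right,
    Set.sdiff_inter_right_comm]
  exact Set.even_ncard_symmDiff_iff (hK.inter_of_right _) (hK.inter_of_right _).sdiff

namespace EvenlySeenOutside

theorem localComp_of_notMem (hK : K.Finite) (hKD : K ⊆ D) (hseen : EvenlySeenOutside G K D)
    (hv : v ∉ D) : EvenlySeenOutside (localComp G v) K D := by
  intro u hu
  by_cases hadj : G.Adj v u
  · have huK : u ∉ G.neighborSet v ∩ K := fun h => hu (hKD h.2)
    rw [even_ncard_localComp_neighborSet_inter_iff hK hadj, Set.sdiff_singleton_eq_self huK]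
    exact iff_of_true (hseen u hu) (hseen v hv)
  · rw [localComp_neighborSet_of_not_adj hadj]
    exact hseen u hu

theorem not_even_ncard_localComp_neighborSet_inter (hK : K.Finite)
    (hseen : EvenlySeenOutside G K D) (hx : x ∈ K) (hv : v ∉ D) (hadj : G.Adj v x)
    (hpar : Even ((G.neighborSet x ∩ K).ncard)) :
    ¬Even (((localComp G v).neighborSet x ∩ K).ncard) := by
  have hxN : x ∈ G.neighborSet v ∩ K := ⟨hadj, hx⟩
  rw [even_ncard_localComp_neighborSet_inter_iff hK hadj,
    Set.even_ncard_sdiff_singleton_iff hxN (hK.inter_of_right _)]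
  simp [hpar, hseen v hv]

theorem localComp_sdiff_singleton (hK : K.Finite) (hKD : K ⊆ D)
    (hseen : EvenlySeenOutside G K D) (hx : x ∈ K)
    (hodd : ¬Even ((G.neighborSet x ∩ K).ncard)) :
    EvenlySeenOutside (localComp G x) (K \ {x}) D := by
  intro u hu
  by_cases hadj : G.Adj x u
  · have hNx : (G.neighborSet x ∩ (K \ {x})) \ {u} = G.neighborSet x ∩ K := by
      ext w
      simp only [Set.mem_sdiff, Set.mem_inter_iff, Set.mem_singleton_iff, mem_neighborSet]
      have := G.ne_of_adj (a := x) (b := w)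
      have : w ∈ K → w ≠ u := fun hw h => hu (hKD (h ▸ hw))
      tauto
    have hxNu : x ∈ G.neighborSet u ∩ K := ⟨hadj.symm, hx⟩
    rw [even_ncard_localComp_neighborSet_inter_iff hK.sdiff hadj, hNx, ← Set.inter_sdiff_assoc,
      Set.even_ncard_sdiff_singleton_iff hxNu (hK.inter_of_right _)]
    simp [hseen u hu, hodd]
  · have hxNu : x ∉ G.neighborSet u ∩ K := fun h => hadj h.1.symm
    rw [localComp_neighborSet_of_not_adj hadj, ← Set.inter_sdiff_assoc,
      Set.sdiff_singleton_eq_self hxNu]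
    exact hseen u hu

end EvenlySeenOutside

theorem sdiff_singleton_nonempty_of_not_even (hodd : ¬Even ((G.neighborSet x ∩ K).ncard)) :
    (K \ {x}).Nonempty := by
  obtain ⟨y, hxy, hy⟩ := Set.nonempty_of_ncard_ne_zero (fun h => hodd (h ▸ .zero))
  exact ⟨y, hy, (G.ne_of_adj hxy).symm⟩

theorem minDegree_le_ncard_sub_one (hD : D.Finite) (hx : x ∈ D) (hN : G.neighborSet x ⊆ D) :
    _root_.minDegree G ≤ D.ncard - 1 :=
  calc _root_.minDegree G ≤ (G.neighborSet x).ncard := Nat.sInf_le ⟨x, rfl⟩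
    _ ≤ (D \ {x}).ncard :=
      Set.ncard_le_ncard (fun _ hw => ⟨hN hw, (G.ne_of_adj hw).symm⟩) hD.sdiff
    _ = D.ncard - 1 := Set.ncard_sdiff_singleton_of_mem hx

theorem EvenlySeenOutside.exists_minDegree_foldl_localComp_le (hD : D.Finite) (hKD : K ⊆ D)
    (hne : K.Nonempty) (hseen : EvenlySeenOutside G K D) :
    ∃ l : List V, _root_.minDegree (l.foldl localComp G) ≤ D.ncard - 1 := by
  induction hn : K.ncard using Nat.strong_induction_on generalizing G K with
  | _ n ih =>
  have hK := hD.subset hKD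
  have of_odd : ∀ G' : SimpleGraph V, EvenlySeenOutside G' K D → ∀ x ∈ K,
      ¬Even ((G'.neighborSet x ∩ K).ncard) →
      ∃ l : List V, _root_.minDegree (l.foldl localComp G') ≤ D.ncard - 1 := by
    intro G' hseen' x hx hodd
    obtain ⟨l, hl⟩ := ih (K \ {x}).ncard (hn ▸ Set.ncard_sdiff_singleton_lt_of_mem hx hK)
      ((Set.sdiff_subset).trans hKD) (sdiff_singleton_nonempty_of_not_even hodd)
      (hseen'.localComp_sdiff_singleton hK hKD hx hodd) rfl
    exact ⟨x :: l, hl⟩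
  by_cases hterm : ∃ x ∈ K, G.neighborSet x ⊆ D
  · obtain ⟨x, hx, hN⟩ := hterm
    exact ⟨[], minDegree_le_ncard_sub_one hD (hKD hx) hN⟩
  push Not at hterm
  obtain ⟨x, hx⟩ := hne
  by_cases hpar : Even ((G.neighborSet x ∩ K).ncard)
  · obtain ⟨v, hvx, hv⟩ := Set.not_subset.mp (hterm x hx)
    obtain ⟨l, hl⟩ := of_odd _ (hseen.localComp_of_notMem hK hKD hv) x hx
      (hseen.not_even_ncard_localComp_neighborSet_inter hK hx hv hvx.symm hpar)
    exact ⟨v :: l, hl⟩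
  · exact of_odd G hseen x hx hpar

theorem statement_1_general [Fintype V] (G : SimpleGraph V) (d : ℕ)
    (hK : ∃ K : Set V, LocallyEvenlySeen G d K) :
    minDegreeLoc G ≤ d - 1 := by
  obtain ⟨K, hne, D, hKD, rfl, hseen⟩ := hK
  obtain ⟨l, hl⟩ :=
    EvenlySeenOutside.exists_minDegree_foldl_localComp_le D.toFinite hKD hne hseen
  exact le_trans (Nat.sInf_le ⟨l, rfl⟩) hl

/-- If a graph `G` (finite, nonempty vertex set) has a
`d`-locally evenly seen set (where `d ≥ 1`), then `δ_loc(G) ≤ d - 1`. -/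
theorem statement_1 [Fintype V] [Nonempty V] (G : SimpleGraph V) (d : ℕ) (hd : 1 ≤ d)
    (hK : ∃ K : Set V, LocallyEvenlySeen G d K) :
    minDegreeLoc G ≤ d - 1 :=
  statement_1_general G d hK
end

section
/- Let G = (V, E) be a finite simple graph, v ∈ V a vertex, and d an integer. Then G has a d-locally evenly seen set if and only if λ_v(G) has a d-locally evenly seen set. -/
open SimpleGraph

variable {V : Type*}

/-! Outside `K`, a neighbour `u` of `v` sees `K` in `λ_v(G)` through `(N(u) Δ N(v)) ∩ K`, so
its parity changes by that of `|N(v) ∩ K|`, while non-neighbours of `v` are unaffected. If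
`|N(v) ∩ K|` is even, `K` stays `d`-locally evenly seen with the same `D`. If it is odd, then
`v ∈ D`, and `K Δ {v}` works: toggling `v` flips the parity seen by exactly the neighbours of
`v`. The converse follows because `λ_v` is an involution. -/

open symmDiff

lemma Set.natCast_ncard_symmDiff_zmod_two {α : Type*} {s t : Set α} (hs : s.Finite)
    (ht : t.Finite) : ((s ∆ t).ncard : ZMod 2) = s.ncard + t.ncard := by
  have hsub : (s ∩ t) ⊆ s ∪ t := Set.inter_subset_left.trans Set.subset_union_left
  have hcount : (s ∆ t).ncard + 2 * (s ∩ t).ncard = s.ncard + t.ncard := by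
    rw [symmDiff_eq_sup_sdiff_inf, ← Set.ncard_union_add_ncard_inter s t hs ht,
      ← Set.ncard_sdiff_add_ncard_of_subset hsub (hs.union ht)]
    simp only [Set.sup_eq_union, Set.inf_eq_inter]
    ring
  have h2 : (2 : ZMod 2) = 0 := rfl
  simpa [h2] using congrArg (fun n : ℕ => (n : ZMod 2)) hcount

lemma localComp_adj (G : SimpleGraph V) (v u w : V) :
    (localComp G v).Adj u w ↔ u ≠ w ∧ ¬ (G.Adj u w ↔ (G.Adj v u ∧ G.Adj v w)) :=
  Iff.rfl

lemma localComp_adj_self_left (G : SimpleGraph V) (v u : V) :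
    (localComp G v).Adj v u ↔ G.Adj v u := by
  have := G.loopless.irrefl v
  rw [localComp_adj]
  exact ⟨fun h => by tauto, fun h => ⟨G.ne_of_adj h, by tauto⟩⟩

lemma localComp_localComp (G : SimpleGraph V) (v : V) :
    localComp (localComp G v) v = G := by
  ext u w
  have hu := localComp_adj_self_left G v u
  have hw := localComp_adj_self_left G v w
  have := G.ne_of_adj (a := u) (b := w)
  rw [localComp_adj, hu, hw, localComp_adj]
  tauto

lemma neighborSet_localComp_of_not_adj (G : SimpleGraph V) {v u : V} (h : ¬ G.Adj v u) :
    (localComp G v).neighborSet u = G.neighborSet u := by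
  ext w
  have := G.ne_of_adj (a := u) (b := w)
  simp only [mem_neighborSet, localComp_adj]
  tauto

lemma neighborSet_localComp_of_adj (G : SimpleGraph V) {v u : V} (h : G.Adj v u) :
    (localComp G v).neighborSet u = (G.neighborSet u ∆ G.neighborSet v) \ {u} := by
  ext w
  have := G.adj_comm v w
  simp only [mem_neighborSet, localComp_adj, Set.mem_sdiff, Set.mem_symmDiff,
    Set.mem_singleton_iff]
  constructor
  · rintro ⟨hne, hv⟩
    exact ⟨by tauto, fun h' => hne h'.symm⟩
  · rintro ⟨hw, hne⟩
    exact ⟨fun h' => hne h'.symm, by tauto⟩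

open Classical in
lemma natCast_ncard_neighborSet_localComp_inter (G : SimpleGraph V) (v : V)
    {K : Set V} (hK : K.Finite) {u : V} (hu : u ∉ K) :
    (((localComp G v).neighborSet u ∩ K).ncard : ZMod 2) =
      (G.neighborSet u ∩ K).ncard +
        if G.Adj v u then ((G.neighborSet v ∩ K).ncard : ZMod 2) else 0 := by
  by_cases h : G.Adj v u
  · have hinter : (G.neighborSet u ∆ G.neighborSet v) \ {u} ∩ K =
        (G.neighborSet u ∩ K) ∆ (G.neighborSet v ∩ K) := by
      rw [Set.sdiff_inter_right_comm, ← Set.inter_symmDiff_distrib_right, sdiff_eq_left.2]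
      exact Set.disjoint_singleton_right.2 fun hu' => hu hu'.2
    rw [neighborSet_localComp_of_adj G h, hinter,
      Set.natCast_ncard_symmDiff_zmod_two (hK.inter_of_right _) (hK.inter_of_right _), if_pos h]
  · rw [neighborSet_localComp_of_not_adj G h, if_neg h, add_zero]

lemma LocallyEvenlySeen.exists_localComp [Finite V] {G : SimpleGraph V} {d : ℕ} {K : Set V}
    (hK : LocallyEvenlySeen G d K) (v : V) :
    ∃ K' : Set V, LocallyEvenlySeen (localComp G v) d K' := by
  classical
  obtain ⟨hne, D, hKD, hD, heven⟩ := hK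
  have hcast (u : V) (hu : u ∉ D) : ((G.neighborSet u ∩ K).ncard : ZMod 2) = 0 :=
    ZMod.natCast_eq_zero_iff_even.2 (heven u hu)
  by_cases hv : Even (G.neighborSet v ∩ K).ncard
  · refine ⟨K, hne, D, hKD, hD, fun u hu => ?_⟩
    rw [← ZMod.natCast_eq_zero_iff_even,
      natCast_ncard_neighborSet_localComp_inter G v K.toFinite fun h => hu (hKD h),
      hcast u hu, ZMod.natCast_eq_zero_iff_even.2 hv, ite_self, add_zero]
  have hvD : v ∈ D := by_contra fun h => hv (heven v h)
  obtain ⟨w, hwv, hwK⟩ : (G.neighborSet v ∩ K).Nonempty :=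
    Set.nonempty_of_ncard_ne_zero fun h => hv (h ▸ .zero)
  refine ⟨K ∆ {v}, ⟨w, Or.inl ⟨hwK, (G.ne_of_adj hwv).symm⟩⟩, D,
    Set.symmDiff_subset_union.trans (Set.union_subset hKD (Set.singleton_subset_iff.2 hvD)), hD,
    fun u hu => ?_⟩
  have hsees_v : (((localComp G v).neighborSet u ∩ {v}).ncard : ZMod 2) =
      if G.Adj v u then 1 else 0 := by
    split_ifs with h
    · rw [Set.inter_singleton_of_mem (show v ∈ (localComp G v).neighborSet u from
          ((localComp_adj_self_left G v u).2 h).symm),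
        Set.ncard_singleton, Nat.cast_one]
    · rw [Set.inter_singleton_eq_empty.2 fun h' => h ((localComp_adj_self_left G v u).1 h'.symm),
        Set.ncard_empty, Nat.cast_zero]
  rw [← ZMod.natCast_eq_zero_iff_even, Set.inter_symmDiff_distrib_left,
    Set.natCast_ncard_symmDiff_zmod_two (Set.toFinite _) (Set.toFinite _),
    natCast_ncard_neighborSet_localComp_inter G v K.toFinite fun h => hu (hKD h), hcast u hu,
    ZMod.natCast_eq_one_iff_odd.2 (Nat.not_even_iff_odd.1 hv), hsees_v]
  split_ifs <;> decide

/-- `G` has a `d`-locally evenly seen set iff `λ_v(G)` has a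
`d`-locally evenly seen set. -/
theorem statement_5 [Fintype V] (G : SimpleGraph V) (v : V) (d : ℕ) :
    (∃ K : Set V, LocallyEvenlySeen G d K) ↔
      (∃ K : Set V, LocallyEvenlySeen (localComp G v) d K) := by
  refine ⟨fun ⟨K, hK⟩ => hK.exists_localComp v, fun ⟨K, hK⟩ => ?_⟩
  simpa only [localComp_localComp] using hK.exists_localComp v
end

section
/- Let G = (V, E) be a finite simple graph with δ(G) = δ_loc(G) = d, and let D ⊆ V with |D| = d. Then for every assignment σ : D → {0,1} there exists a set S ⊆ V \ D such that for every v ∈ D, |N_G(v) ∩ S| ≡ σ(v) (mod 2). (Equivalently, in Sutner's σ-game, where pressing a vertex flips the 0/1 values of all its neighbors, every configuration on D can be reached from the all-zero configuration by pressing only vertices outside D.) -/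
open SimpleGraph

variable {V : Type*}

/-!
Over `𝔽₂`, `S ↦ (|N(v) ∩ S| mod 2)_{v ∈ D}` is the linear map `𝔽₂^(V \ D) → 𝔽₂^D` given by the
`D × (V \ D)` block of the adjacency matrix. It is onto iff its transpose is injective, i.e. iff
there is no nonempty `K ⊆ D` in which every vertex outside `D` has an even number of neighbours,
i.e. no `d`-locally evenly seen `K` with witness `D`. And a `d`-locally evenly seen `K` forces
`δ_loc(G) < d`, by induction on `|K|`. Pick `v ∈ K`. If all neighbours of `v` lie in `D`, then
`deg v < |D| = d`. Otherwise, after at most one local complementation at a neighbour of `v`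
outside `D`, the vertex `v` has an odd number of neighbours in `K`; then, in the local complement
at `v`, every vertex outside `D` again has an even number of neighbours in `K \ {v}`.
-/

open Matrix

lemma zmod_two_eq_zero_or_one (x : ZMod 2) : x = 0 ∨ x = 1 := by
  revert x; decide

theorem Matrix.mulVec_surjective_of_injective_transpose {m n K : Type*} [Fintype m] [Fintype n]
    [Field K] (A : Matrix m n K) (h : Function.Injective Aᵀ.mulVec) :
    Function.Surjective A.mulVec := by
  have hrank : A.rank = Fintype.card m := by
    rw [← rank_transpose, Matrix.rank, LinearMap.finrank_range_of_inj h,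
      Module.finrank_fintype_fun_eq_card]
  rw [← Matrix.coe_mulVecLin, ← LinearMap.range_eq_top]
  exact Submodule.eq_top_of_finrank_eq
    (by rw [← Matrix.rank, hrank, Module.finrank_fintype_fun_eq_card])

lemma indicator_image_val_apply {B : Set V} (x : B → ZMod 2) (b : B) :
    (Subtype.val '' {b | x b = 1}).indicator 1 (b : V) = x b := by
  rcases zmod_two_eq_zero_or_one (x b) with h | h <;>
    simp [Subtype.val_injective.mem_set_image, h]

section Parity

open Classical

variable (G : SimpleGraph V)

noncomputable def nbrParity (K : Set V) (u : V) : ZMod 2 :=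
  (G.neighborSet u ∩ K).ncard

lemma nbrParity_eq_mulVec [Fintype V] (K : Set V) :
    nbrParity G K = G.adjMatrix (ZMod 2) *ᵥ K.indicator 1 := by
  ext u
  simp only [nbrParity, mulVec, dotProduct, adjMatrix_apply, Set.indicator_apply, Pi.one_apply,
    ite_zero_mul_ite_zero, mul_one, Finset.sum_boole, Set.ncard_eq_toFinset_card']
  congr
  ext w
  simp

lemma localComp_adj_pivot_iff (v u : V) : (localComp G v).Adj u v ↔ G.Adj u v := by
  by_cases h : G.Adj u v <;> simp [localComp, h, G.ne_of_adj]

/-- With `a` the row of `v`, local complementation at `v` adds `a aᵀ` to the adjacency matrix;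
the diagonal term removes the loops this would create. -/
lemma adjMatrix_localComp [Fintype V] (v : V) :
    (localComp G v).adjMatrix (ZMod 2) = G.adjMatrix (ZMod 2) +
      vecMulVec (G.adjMatrix (ZMod 2) v) (G.adjMatrix (ZMod 2) v) +
      diagonal (G.adjMatrix (ZMod 2) v) := by
  ext u w
  simp only [adjMatrix_apply, Matrix.add_apply, vecMulVec_apply, diagonal_apply]
  simp only [localComp]
  by_cases u = w <;> by_cases G.Adj u w <;> by_cases G.Adj v u <;> by_cases G.Adj v w <;>
    simp_all <;> decide

lemma nbrParity_localComp [Fintype V] (K : Set V) (v u : V) :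
    nbrParity (localComp G v) K u =
      nbrParity G K u + G.adjMatrix (ZMod 2) v u * (nbrParity G K v + K.indicator 1 u) := by
  simp only [nbrParity_eq_mulVec, adjMatrix_localComp, add_mulVec, vecMulVec_mulVec, Pi.add_apply,
    mulVec_diagonal, Pi.smul_apply, MulOpposite.smul_eq_mul_unop, MulOpposite.unop_op]
  simp only [mulVec]
  ring

lemma nbrParity_sdiff_singleton [Fintype V] {K : Set V} {v : V} (hv : v ∈ K) (u : V) :
    nbrParity G (K \ {v}) u = nbrParity G K u + G.adjMatrix (ZMod 2) u v := by
  rw [nbrParity_eq_mulVec, nbrParity_eq_mulVec,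
    Set.indicator_sdiff (Set.singleton_subset_iff.2 hv), Set.indicator_singleton, Pi.one_apply,
    mulVec_sub, mulVec_single_one, Pi.sub_apply, ZModModule.sub_eq_add]
  rfl

variable {G}

lemma nbrParity_localComp_sdiff_eq_zero [Fintype V] {K : Set V} {u v : V} (hv : v ∈ K)
    (hodd : nbrParity G K v = 1) (hu : u ∉ K) (heven : nbrParity G K u = 0) :
    nbrParity (localComp G v) (K \ {v}) u = 0 := by
  rw [nbrParity_sdiff_singleton _ hv, nbrParity_localComp, heven, hodd,
    Set.indicator_of_notMem hu, adjMatrix_apply, adjMatrix_apply, localComp_adj_pivot_iff,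
    G.adj_comm]
  simp only [zero_add, add_zero, mul_one, CharTwo.add_self_eq_zero]

lemma sdiff_singleton_nonempty_of_nbrParity_eq_one {K : Set V} {v : V}
    (hodd : nbrParity G K v = 1) : (K \ {v}).Nonempty := by
  have hne : (G.neighborSet v ∩ K).ncard ≠ 0 := fun h => by simp [nbrParity, h] at hodd
  obtain ⟨w, hvw, hw⟩ := Set.nonempty_of_ncard_ne_zero hne
  exact ⟨w, hw, (G.ne_of_adj hvw).symm⟩

lemma exists_foldl_localComp_nbrParity_eq_one [Fintype V] {D K : Set V} {u v : V}
    (hKD : K ⊆ D) (hv : v ∈ K) (hu : u ∉ D) (huv : G.Adj u v)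
    (heven : ∀ w ∉ D, nbrParity G K w = 0) :
    ∃ l : List V, nbrParity (l.foldl localComp G) K v = 1 ∧
      ∀ w ∉ D, nbrParity (l.foldl localComp G) K w = 0 := by
  rcases zmod_two_eq_zero_or_one (nbrParity G K v) with h0 | h1
  · refine ⟨[u], ?_, fun w hw => ?_⟩ <;>
      simp only [List.foldl_cons, List.foldl_nil, nbrParity_localComp, heven u hu]
    · rw [h0, Set.indicator_of_mem hv, Pi.one_apply, adjMatrix_apply, if_pos huv]
      decide
    · rw [heven w hw, Set.indicator_of_notMem (fun h => hw (hKD h))]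
      simp
  · exact ⟨[], h1, heven⟩

lemma minDegree_lt_ncard_of_neighborSet_subset [Finite V] {D : Set V} {v : V} (hv : v ∈ D)
    (hN : G.neighborSet v ⊆ D) : _root_.minDegree G < D.ncard :=
  calc _root_.minDegree G ≤ (G.neighborSet v).ncard := Nat.sInf_le ⟨v, rfl⟩
    _ < D.ncard :=
      Set.ncard_lt_ncard ((Set.ssubset_iff_of_subset hN).2 ⟨v, hv, G.loopless.irrefl v⟩)

theorem exists_minDegree_foldl_localComp_lt [Fintype V] {D K : Set V} (hKD : K ⊆ D)
    (hK : K.Nonempty) (heven : ∀ u ∉ D, nbrParity G K u = 0) :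
    ∃ l : List V, _root_.minDegree (l.foldl localComp G) < D.ncard := by
  induction hn : K.ncard generalizing G K with
  | zero => exact absurd hn ((Set.ncard_pos K.toFinite).2 hK).ne'
  | succ n ih =>
    obtain ⟨v, hv⟩ := hK
    by_cases hN : G.neighborSet v ⊆ D
    · exact ⟨[], minDegree_lt_ncard_of_neighborSet_subset (hKD hv) hN⟩
    obtain ⟨u, hvu, hu⟩ := Set.not_subset.1 hN
    obtain ⟨l, hodd, heven'⟩ :=
      exists_foldl_localComp_nbrParity_eq_one hKD hv hu hvu.symm heven
    obtain ⟨l', hl'⟩ := ih (G := localComp (l.foldl localComp G) v) (K := K \ {v})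
      (Set.sdiff_subset.trans hKD) (sdiff_singleton_nonempty_of_nbrParity_eq_one hodd)
      (fun w hw => nbrParity_localComp_sdiff_eq_zero hv hodd (fun h => hw (hKD h)) (heven' w hw))
      (by rw [Set.ncard_sdiff_singleton_of_mem hv, hn, Nat.add_sub_cancel])
    exact ⟨l ++ v :: l', by simpa only [List.foldl_append, List.foldl_cons] using hl'⟩

theorem LocallyEvenlySeen.minDegreeLoc_lt [Fintype V] {d : ℕ} {K : Set V}
    (h : LocallyEvenlySeen G d K) : minDegreeLoc G < d := by
  obtain ⟨hK, D, hKD, rfl, heven⟩ := h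
  obtain ⟨l, hl⟩ := exists_minDegree_foldl_localComp_lt hKD hK
    fun u hu => ZMod.natCast_eq_zero_iff_even.2 (heven u hu)
  exact lt_of_le_of_lt (Nat.sInf_le ⟨l, rfl⟩ : minDegreeLoc G ≤ _) hl

end Parity

section Realization

open Classical

variable [Fintype V] (G : SimpleGraph V)

lemma submatrix_mulVec_eq_nbrParity {A B : Set V} [Fintype B] (x : B → ZMod 2) (a : A) :
    ((G.adjMatrix (ZMod 2)).submatrix (↑) (↑) *ᵥ x) a =
      nbrParity G (Subtype.val '' {b | x b = 1}) a := by
  set S := Subtype.val '' {b | x b = 1}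
  have hS : ∀ w ∉ B, S.indicator (1 : V → ZMod 2) w = 0 := fun w hw =>
    Set.indicator_of_notMem (by rintro ⟨b, -, rfl⟩; exact hw b.2) _
  calc ∑ b : B, G.adjMatrix (ZMod 2) a b * x b
      = ∑ b : B, G.adjMatrix (ZMod 2) a b * S.indicator 1 b := by
        simp only [S, indicator_image_val_apply]
    _ = ∑ w ∈ B.toFinset, G.adjMatrix (ZMod 2) a w * S.indicator 1 w :=
        Finset.sum_set_coe (f := fun w => G.adjMatrix (ZMod 2) a w * S.indicator 1 w) B
    _ = ∑ w, G.adjMatrix (ZMod 2) a w * S.indicator 1 w :=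
        Finset.sum_subset (Finset.subset_univ _) fun w _ hw => by
          rw [hS w (by simpa using hw), mul_zero]
    _ = nbrParity G S a := by rw [nbrParity_eq_mulVec]; rfl

lemma locallyEvenlySeen_of_transpose_mulVec_eq_zero {D : Set V} [Fintype D] [Fintype ↥Dᶜ]
    {y : D → ZMod 2} (hy0 : y ≠ 0)
    (hy : ((G.adjMatrix (ZMod 2)).submatrix ((↑) : D → V) ((↑) : ↥Dᶜ → V))ᵀ *ᵥ y = 0) :
    LocallyEvenlySeen G D.ncard (Subtype.val '' {v | y v = 1}) := by
  refine ⟨?_, D, by rintro _ ⟨v, -, rfl⟩; exact v.2, rfl, fun u hu => ?_⟩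
  · obtain ⟨v, hv⟩ := Function.ne_iff.1 hy0
    exact ⟨v, v, (zmod_two_eq_zero_or_one (y v)).resolve_left hv, rfl⟩
  · have hu0 := congrFun hy ⟨u, hu⟩
    rw [transpose_submatrix, transpose_adjMatrix, submatrix_mulVec_eq_nbrParity] at hu0
    exact ZMod.natCast_eq_zero_iff_even.1 hu0

end Realization

theorem statement_8_general [Fintype V] (G : SimpleGraph V) (d : ℕ)
    (h2 : minDegreeLoc G = d)
    (D : Set V) (hD : D.ncard = d) (sigma : D → ZMod 2) :
    ∃ S : Set V, S ⊆ Dᶜ ∧ ∀ v, (hv : v ∈ D) →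
      ((G.neighborSet v ∩ S).ncard : ZMod 2) = sigma ⟨v, hv⟩ := by
  classical
  set M := (G.adjMatrix (ZMod 2)).submatrix ((↑) : D → V) ((↑) : ↥Dᶜ → V)
  have hinj : Function.Injective Mᵀ.mulVec := by
    refine (injective_iff_map_eq_zero Mᵀ.mulVecLin).2 fun y hy => ?_
    by_contra hy0
    exact (locallyEvenlySeen_of_transpose_mulVec_eq_zero G hy0 hy).minDegreeLoc_lt.ne
      (h2.trans hD.symm)
  obtain ⟨x, hx⟩ := M.mulVec_surjective_of_injective_transpose hinj sigma
  refine ⟨Subtype.val '' {u | x u = 1}, by rintro _ ⟨u, -, rfl⟩; exact u.2, fun v hv => ?_⟩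
  rw [← hx, submatrix_mulVec_eq_nbrParity]
  rfl

/-- If `δ(G) = δ_loc(G) = d` and `|D| = d`, then every 0/1
assignment on `D` can be realized as the parity vector of `|N_G(v) ∩ S|`
for some set `S` of vertices outside `D`. -/
theorem statement_8 [Fintype V] (G : SimpleGraph V) (d : ℕ)
    (h1 : minDegree G = d) (h2 : minDegreeLoc G = d)
    (D : Set V) (hD : D.ncard = d) (sigma : D → ZMod 2) :
    ∃ S : Set V, S ⊆ Dᶜ ∧ ∀ v, (hv : v ∈ D) →
      ((G.neighborSet v ∩ S).ncard : ZMod 2) = sigma ⟨v, hv⟩ :=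
  statement_8_general G d h2 D hD sigma
end
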